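/- arXiv:1612.05821 — 5 statements merged into one kernel-verified Lean document; each statement's English description precedes it below -/
import Mathlib

section
/- In a unital normed algebra, the set of real elements is closed in the norm topology: if (a_n) is a sequence of real elements converging in norm to a, then a is real. -/
/-- An element `a` of a unital normed algebra is positive if `‖1 - ε a‖ ≤ 1 + o(ε)`
as `ε → 0⁺`. -/
def IsPositiveElem {A : Type*} [NormedRing A] [NormedAlgebra ℝ A] (a : A) : Prop :=
  ∀ C > (0 : ℝ), ∃ δ > (0 : ℝ), ∀ ε : ℝ, 0 < ε → ε < δ → ‖1 - ε • a‖ ≤ 1 + C * ε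

/-- An element `a` is real if `a²` is positive. -/
def IsRealElem {A : Type*} [NormedRing A] [NormedAlgebra ℝ A] (a : A) : Prop :=
  IsPositiveElem (a ^ 2)

/-!
Positivity of `a` is a family of inequalities `‖1 - ε • a‖ ≤ 1 + C ε`, and replacing `a` by `b`
moves `‖1 - ε • a‖` by at most `ε ‖a - b‖`. So if `b` is positive and within `C / 2` of `a`, the
bound for `b` with constant `C / 2` gives the bound for `a` with constant `C`: positive elements
form a closed set. Real elements are its preimage under the continuous map `a ↦ a ^ 2`.
-/

open Filter

section

variable {A : Type*} [NormedRing A] [NormedAlgebra ℝ A]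

theorem norm_one_sub_smul_le_add {ε : ℝ} (hε : 0 ≤ ε) (a b : A) :
    ‖1 - ε • a‖ ≤ ‖1 - ε • b‖ + ε * ‖a - b‖ := by
  calc ‖1 - ε • a‖ = ‖(1 - ε • b) + ε • (b - a)‖ := by rw [smul_sub]; abel_nf
    _ ≤ ‖1 - ε • b‖ + ‖ε • (b - a)‖ := norm_add_le _ _
    _ = ‖1 - ε • b‖ + ε * ‖a - b‖ := by rw [norm_smul, Real.norm_of_nonneg hε, norm_sub_rev b a]

theorem isClosed_setOf_isPositiveElem : IsClosed {a : A | IsPositiveElem a} := by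
  refine isClosed_of_closure_subset fun a ha C hC => ?_
  obtain ⟨b, hb, hab⟩ := Metric.mem_closure_iff.mp ha (C / 2) (half_pos hC)
  obtain ⟨δ, hδ, hbound⟩ := hb (C / 2) (half_pos hC)
  refine ⟨δ, hδ, fun ε hε hεδ => ?_⟩
  rw [dist_eq_norm] at hab
  calc ‖1 - ε • a‖ ≤ ‖1 - ε • b‖ + ε * ‖a - b‖ := norm_one_sub_smul_le_add hε.le a b
    _ ≤ (1 + C / 2 * ε) + ε * (C / 2) := by gcongr; exact hbound ε hε hεδ
    _ = 1 + C * ε := by ring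

theorem isClosed_setOf_isRealElem : IsClosed {a : A | IsRealElem a} :=
  isClosed_setOf_isPositiveElem.preimage (continuous_pow 2)

end

theorem isRealElem_closed_general {A : Type*} [NormedRing A] [NormedAlgebra ℝ A]
    (a : ℕ → A) (ha : ∀ n, IsRealElem (a n)) (l : A)
    (hlim : Filter.Tendsto a Filter.atTop (nhds l)) :
    IsRealElem l :=
  isClosed_setOf_isRealElem.mem_of_tendsto hlim (Eventually.of_forall ha)

/-- In a unital normed algebra the set of real elements is norm-closed: the limit of a
norm-convergent sequence of real elements is real. -/
theorem isRealElem_closed {A : Type*} [NormedRing A] [NormOneClass A] [NormedAlgebra ℝ A]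
    (a : ℕ → A) (ha : ∀ n, IsRealElem (a n)) (l : A)
    (hlim : Filter.Tendsto a Filter.atTop (nhds l)) :
    IsRealElem l :=
  isRealElem_closed_general a ha l hlim
end

section
/- Let T be a Hermitian operator on a complex Banach space X, i.e., ‖exp(itT)‖ = 1 for all t ∈ ℝ. Then T is real: T² is a positive element of B(X), i.e., for every C > 0 there exists δ > 0 such that ‖1 − εT²‖ ≤ 1 + Cε for all ε ∈ (0, δ). -/
set_option maxHeartbeats 1000000

open NormedSpace Finset Nat

lemma fact_ge (n : ℕ) : 6 * 2 ^ n ≤ (n + 3)! := by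
  induction n with
  | zero => simp [Nat.factorial]
  | succ n ih =>
      have h1 : (n + 4)! = (n + 4) * (n + 3)! := Nat.factorial_succ (n + 3)
      have h2 : 2 * (n + 3)! ≤ (n + 4) * (n + 3)! :=
        Nat.mul_le_mul_right _ (by omega)
      calc 6 * 2 ^ (n + 1) = 2 * (6 * 2 ^ n) := by ring
        _ ≤ 2 * (n + 3)! := by omega
        _ ≤ (n + 4) * (n + 3)! := h2
        _ = (n + 4)! := h1.symm

lemma exp_taylor2 {A : Type*} [NormedRing A] [NormedAlgebra ℂ A] [CompleteSpace A]
    (x : A) (hx : ‖x‖ ≤ 1) :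
    ‖NormedSpace.exp x - (1 + x + ((2:ℂ)⁻¹) • x ^ 2)‖ ≤ ‖x‖ ^ 3 := by
  have hsum : Summable fun n : ℕ => ((n !⁻¹ : ℂ)) • x ^ n :=
    NormedSpace.expSeries_summable' (𝕂 := ℂ) x
  have hexp : NormedSpace.exp x = ∑' n : ℕ, ((n !⁻¹ : ℂ)) • x ^ n := by
    rw [NormedSpace.exp_eq_tsum ℂ]
  have hsplit := Summable.sum_add_tsum_nat_add (f := fun n : ℕ => ((n !⁻¹ : ℂ)) • x ^ n) 3 hsum
  have hpart : (∑ n ∈ range 3, ((n !⁻¹ : ℂ)) • x ^ n) = 1 + x + ((2:ℂ)⁻¹) • x ^ 2 := by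
    simp [Finset.sum_range_succ, Nat.factorial]
  have key : NormedSpace.exp x - (1 + x + ((2:ℂ)⁻¹) • x ^ 2)
      = ∑' n : ℕ, (((n + 3)!⁻¹ : ℂ)) • x ^ (n + 3) := by
    rw [hexp, ← hsplit, hpart, add_sub_cancel_left]
  rw [key]
  have hb : ∀ n : ℕ, ‖(((n + 3)!⁻¹ : ℂ)) • x ^ (n + 3)‖ ≤ ‖x‖ ^ 3 * ((1/6) * (1/2) ^ n) := by
    intro n
    have e1 : ‖(((n + 3)! : ℕ) : ℂ)⁻¹‖ = ((((n + 3)! : ℕ) : ℝ))⁻¹ := by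
      rw [norm_inv, Complex.norm_natCast]
    have h1 : ‖(((n + 3)!⁻¹ : ℂ)) • x ^ (n + 3)‖ ≤ (((n+3)! : ℝ))⁻¹ * ‖x‖ ^ (n + 3) := by
      rw [norm_smul, e1]
      gcongr
      exact norm_pow_le' x (by omega)
    have h6 : (6 * 2 ^ n : ℝ) ≤ ((n+3)! : ℝ) := by exact_mod_cast fact_ge n
    have h2 : (((n+3)! : ℝ))⁻¹ ≤ (1/6) * (1/2) ^ n := by
      have e : (1/6 : ℝ) * (1/2)^n = ((6:ℝ) * 2^n)⁻¹ := by
        rw [mul_inv, div_pow, one_pow]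
        ring
      rw [e]
      gcongr
    have h3 : ‖x‖ ^ (n + 3) ≤ ‖x‖ ^ 3 := by
      calc ‖x‖ ^ (n+3) = ‖x‖ ^ 3 * ‖x‖ ^ n := by ring
        _ ≤ ‖x‖ ^ 3 * 1 := by
            gcongr
            exact pow_le_one₀ (norm_nonneg x) hx
        _ = ‖x‖ ^ 3 := by ring
    calc ‖(((n + 3)!⁻¹ : ℂ)) • x ^ (n + 3)‖ ≤ (((n+3)! : ℝ))⁻¹ * ‖x‖ ^ (n + 3) := h1
      _ ≤ ((1/6) * (1/2)^n) * (‖x‖ ^ 3) := by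
          apply mul_le_mul h2 h3 (by positivity) (by positivity)
      _ = ‖x‖ ^ 3 * ((1/6) * (1/2) ^ n) := by ring
  have hsum2 : Summable fun n : ℕ => ‖x‖ ^ 3 * ((1/6) * (1/2 : ℝ) ^ n) := by
    apply Summable.mul_left
    exact (summable_geometric_of_lt_one (by norm_num) (by norm_num)).mul_left _
  calc ‖∑' n : ℕ, (((n + 3)!⁻¹ : ℂ)) • x ^ (n + 3)‖
      ≤ ∑' n : ℕ, ‖(((n + 3)!⁻¹ : ℂ)) • x ^ (n + 3)‖ := by
        apply norm_tsum_le_tsum_norm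
        exact (summable_nat_add_iff 3).2 (NormedSpace.norm_expSeries_summable' (𝕂 := ℂ) x)
    _ ≤ ∑' n : ℕ, ‖x‖ ^ 3 * ((1/6) * (1/2 : ℝ) ^ n) := by
        apply Summable.tsum_le_tsum hb _ hsum2
        exact (summable_nat_add_iff 3).2 (NormedSpace.norm_expSeries_summable' (𝕂 := ℂ) x)
    _ = ‖x‖ ^ 3 * ((1/6) * 2) := by
        rw [tsum_mul_left, tsum_mul_left, tsum_geometric_of_lt_one (by norm_num) (by norm_num)]
        norm_num
    _ ≤ ‖x‖ ^ 3 := by nlinarith [pow_nonneg (norm_nonneg x) 3]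



/-- A Hermitian operator on a complex Banach space (one with `‖exp(itT)‖ = 1` for all real `t`)
is real: `T²` is a positive element of `B(X)`, i.e. `‖1 - ε T²‖ ≤ 1 + o(ε)` as `ε → 0⁺`. -/
theorem hermitian_is_real {X : Type*} [NormedAddCommGroup X] [NormedSpace ℂ X] [CompleteSpace X]
    (T : X →L[ℂ] X)
    (hT : ∀ t : ℝ, ‖NormedSpace.exp ((Complex.I * (t : ℂ)) • T)‖ = 1) :
    ∀ C > (0 : ℝ), ∃ δ > (0 : ℝ), ∀ ε : ℝ, 0 < ε → ε < δ →
      ‖(1 : X →L[ℂ] X) - ε • T ^ 2‖ ≤ 1 + C * ε := by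
  intro C hC
  set M : ℝ := ‖T‖ with hM
  have hM0 : 0 ≤ M := norm_nonneg T
  refine ⟨min (C^2/(8*(M^3+1)^2)) (1/(2*M^2+1)), lt_min (by positivity) (by positivity), ?_⟩
  intro ε hε hεδ
  have hεδ1 : ε < C^2/(8*(M^3+1)^2) := lt_of_lt_of_le hεδ (min_le_left _ _)
  have hεδ2 : ε < 1/(2*M^2+1) := lt_of_lt_of_le hεδ (min_le_right _ _)
  set s : ℝ := Real.sqrt (2*ε) with hsdef
  have hs0 : 0 ≤ s := Real.sqrt_nonneg _
  have hs2 : s^2 = 2*ε := Real.sq_sqrt (by linarith)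
  set a : X →L[ℂ] X := (Complex.I * (s:ℂ)) • T with ha
  have hhalf : ∀ v : X →L[ℂ] X, ‖(2:ℂ)⁻¹ • v‖ = 2⁻¹ * ‖v‖ := fun v => by
    refine (norm_smul _ v).trans ?_
    norm_num
  have hna : ‖a‖ = s * M := by
    calc ‖a‖ = ‖Complex.I * (s:ℂ)‖ * ‖T‖ := by rw [ha]; exact norm_smul (Complex.I * (s:ℂ)) T
      _ = s * M := by
          rw [norm_mul, Complex.norm_I, Complex.norm_real, Real.norm_eq_abs,
            abs_of_nonneg hs0, one_mul]
  -- a² = -(2ε) • T²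
  have haa : a ^ 2 = ((-(2*ε) : ℝ) : ℂ) • T ^ 2 := by
    rw [ha, smul_pow]
    congr 1
    have h : ((s:ℂ))^2 = ((2*ε : ℝ) : ℂ) := by
      rw [← hs2]; push_cast; ring
    rw [mul_pow, Complex.I_sq, h]
    push_cast
    ring
  set P : X →L[ℂ] X := 1 + a + ((2:ℂ)⁻¹) • a ^ 2 with hP
  set Q : X →L[ℂ] X := 1 + (-a) + ((2:ℂ)⁻¹) • (-a) ^ 2 with hQ
  have hexpa : ‖NormedSpace.exp a‖ = 1 := hT s
  have hexpna : ‖NormedSpace.exp (-a)‖ = 1 := by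
    have : -a = (Complex.I * ((-s : ℝ) : ℂ)) • T := by
      rw [ha, ← neg_smul]
      congr 1
      push_cast
      ring
    rw [this]
    exact hT (-s)
  -- the key algebraic identity
  have key : (1 : X →L[ℂ] X) - ε • T ^ 2
      = (2:ℂ)⁻¹ • (NormedSpace.exp a + NormedSpace.exp (-a))
        - (2:ℂ)⁻¹ • ((NormedSpace.exp a - P) + (NormedSpace.exp (-a) - Q)) := by
    have hε' : (ε : ℝ) • T ^ 2 = ((ε : ℝ) : ℂ) • T ^ 2 := by
      rw [show ((ε : ℝ) : ℂ) = algebraMap ℝ ℂ ε from rfl, algebraMap_smul]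
    rw [hP, hQ, neg_sq, haa, hε']
    match_scalars <;> (push_cast; ring)
  -- smallness of a
  have hsM1 : s * M ≤ 1 := by
    have h1 : ε * (2*M^2+1) < 1 := by
      rw [lt_div_iff₀ (by positivity)] at hεδ2
      linarith
    have h2 : (s*M)^2 ≤ 1 := by
      have : (s*M)^2 = 2*ε*M^2 := by rw [mul_pow, hs2]
      nlinarith
    nlinarith [mul_nonneg hs0 hM0]
  -- the cube bound
  have hcube : (s * M)^3 ≤ C * ε := by
    have h1 : 4*(M^3+1)^2 * s^2 < C^2 := by
      rw [hs2]
      rw [lt_div_iff₀ (by positivity)] at hεδ1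
      nlinarith
    have h2 : 2 * s * (M^3+1) ≤ C := by
      nlinarith [mul_nonneg hs0 (by positivity : (0:ℝ) ≤ M^3+1), hC.le,
        sq_nonneg (2*s*(M^3+1) - C), sq_nonneg (2*s*(M^3+1) + C)]
    have h3 : (s*M)^3 = 2*ε*(s*M^3) := by
      have : s^3 = s * (2*ε) := by rw [← hs2]; ring
      calc (s*M)^3 = s^3 * M^3 := by ring
        _ = 2*ε*(s*M^3) := by rw [this]; ring
    rw [h3]
    nlinarith [mul_nonneg hs0 (pow_nonneg hM0 3), hε.le]
  -- Taylor bounds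
  have hta : ‖NormedSpace.exp a - P‖ ≤ ‖a‖^3 := exp_taylor2 a (by rw [hna]; exact hsM1)
  have htna : ‖NormedSpace.exp (-a) - Q‖ ≤ ‖a‖^3 := by
    have := exp_taylor2 (-a) (by rw [norm_neg, hna]; exact hsM1)
    rwa [norm_neg a] at this
  -- conclude
  calc ‖(1 : X →L[ℂ] X) - ε • T ^ 2‖
      ≤ ‖(2:ℂ)⁻¹ • (NormedSpace.exp a + NormedSpace.exp (-a))‖
        + ‖(2:ℂ)⁻¹ • ((NormedSpace.exp a - P) + (NormedSpace.exp (-a) - Q))‖ := by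
        rw [key]; exact norm_sub_le _ _
    _ ≤ (2:ℝ)⁻¹ * (‖NormedSpace.exp a‖ + ‖NormedSpace.exp (-a)‖)
        + (2:ℝ)⁻¹ * (‖NormedSpace.exp a - P‖ + ‖NormedSpace.exp (-a) - Q‖) := by
        rw [hhalf, hhalf]
        gcongr <;> exact norm_add_le _ _
    _ ≤ (2:ℝ)⁻¹ * (1 + 1) + (2:ℝ)⁻¹ * (‖a‖^3 + ‖a‖^3) := by
        rw [hexpa, hexpna]
        gcongr
    _ = 1 + ‖a‖^3 := by ring
    _ = 1 + (s*M)^3 := by rw [hna]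
    _ ≤ 1 + C * ε := by linarith
end

section
/- Let T be an essentially selfadjoint bounded operator on a real Hilbert space H, i.e., T − T* is compact. Then T is essentially real: for every C > 0 there exists δ > 0 such that ‖1 − εT²‖_e ≤ 1 + Cε for all ε ∈ (0, δ), where ‖S‖_e = inf{‖S + K‖ : K compact}. -/
/-!
With `A = (T + T*)/2` the selfadjoint part of `T`, the difference `T² - A² = T(T - A) + (T - A)A`
is compact, so `‖1 - εT²‖ₑ ≤ ‖1 - εA²‖`. For selfadjoint `A` and `0 ≤ ε‖A‖² ≤ 2`,
`‖x - εA²x‖² = ‖x‖² - ε(2‖Ax‖² - ε‖A²x‖²) ≤ ‖x‖²`, so in fact `‖1 - εT²‖ₑ ≤ 1` for small `ε`.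
-/

/-- The essential norm of a bounded operator: the distance to the compact operators. -/
noncomputable def essNorm {𝕜 X : Type*} [NontriviallyNormedField 𝕜] [NormedAddCommGroup X]
    [NormedSpace 𝕜 X] (T : X →L[𝕜] X) : ℝ :=
  sInf ((fun K : X →L[𝕜] X => ‖T + K‖) '' {K | IsCompactOperator ⇑K})

open ContinuousLinearMap

section

variable {𝕜 X : Type*} [NontriviallyNormedField 𝕜] [NormedAddCommGroup X] [NormedSpace 𝕜 X]

theorem essNorm_le_norm_add {T K : X →L[𝕜] X} (hK : IsCompactOperator ⇑K) :
    essNorm T ≤ ‖T + K‖ :=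
  csInf_le ⟨0, by rintro _ ⟨L, -, rfl⟩; positivity⟩ ⟨K, hK, rfl⟩

theorem essNorm_le_norm_of_isCompactOperator_sub {S T : X →L[𝕜] X}
    (h : IsCompactOperator ⇑(T - S)) : essNorm S ≤ ‖T‖ := by
  simpa using essNorm_le_norm_add (T := S) h

theorem isCompactOperator_sq_sub_sq {S T : X →L[𝕜] X} (h : IsCompactOperator ⇑(T - S)) :
    IsCompactOperator ⇑(T ^ 2 - S ^ 2) := by
  have hsplit : T ^ 2 - S ^ 2 = T * (T - S) + (T - S) * S := by noncomm_ring
  rw [hsplit]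
  exact (h.clm_comp T).add (h.comp_clm S)

end

theorem IsSelfAdjoint.norm_one_sub_smul_sq_le_one {𝕜 E : Type*} [RCLike 𝕜] [NormedAddCommGroup E]
    [InnerProductSpace 𝕜 E] [CompleteSpace E] {A : E →L[𝕜] E} (hA : IsSelfAdjoint A)
    {ε : ℝ} (hε : 0 ≤ ε) (hεA : ε * ‖A‖ ^ 2 ≤ 2) :
    ‖1 - (ε : 𝕜) • A ^ 2‖ ≤ 1 := by
  refine opNorm_le_bound _ zero_le_one fun x => ?_
  have hinner : RCLike.re (inner 𝕜 x (A (A x))) = ‖A x‖ ^ 2 := by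
    conv_rhs => rw [apply_norm_sq_eq_inner_adjoint_right, hA.adjoint_eq]
    rfl
  have hsq : ‖x - (ε : 𝕜) • A (A x)‖ ^ 2 ≤ ‖x‖ ^ 2 := by
    rw [@norm_sub_sq 𝕜, inner_smul_right, RCLike.re_ofReal_mul, hinner, norm_smul,
      RCLike.norm_ofReal, abs_of_nonneg hε]
    have hAAx_sq : ‖A (A x)‖ ^ 2 ≤ ‖A‖ ^ 2 * ‖A x‖ ^ 2 := by
      rw [← mul_pow]
      gcongr
      exact A.le_opNorm _
    nlinarith [mul_le_mul_of_nonneg_left hAAx_sq (sq_nonneg ε),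
      mul_le_mul_of_nonneg_right hεA (mul_nonneg hε (sq_nonneg ‖A x‖))]
  have happly : (1 - (ε : 𝕜) • A ^ 2 : E →L[𝕜] E) x = x - (ε : 𝕜) • A (A x) := rfl
  rw [one_mul, happly]
  exact (pow_le_pow_iff_left₀ (norm_nonneg _) (norm_nonneg _) two_ne_zero).mp hsq

/-- An essentially selfadjoint operator on a real Hilbert space (`T - T*` compact) is
essentially real: `‖1 - ε T²‖ₑ ≤ 1 + o(ε)` as `ε → 0⁺`. -/
theorem essentiallySelfAdjoint_essentiallyReal {H : Type*} [NormedAddCommGroup H]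
    [InnerProductSpace ℝ H] [CompleteSpace H] (T : H →L[ℝ] H)
    (hT : IsCompactOperator ⇑(T - ContinuousLinearMap.adjoint T)) :
    ∀ C > (0 : ℝ), ∃ δ > (0 : ℝ), ∀ ε : ℝ, 0 < ε → ε < δ →
      essNorm (1 - ε • T ^ 2) ≤ 1 + C * ε := by
  intro C hC
  set A : H →L[ℝ] H := (selfAdjointPart ℝ T : H →L[ℝ] H)
  have hA : IsSelfAdjoint A := (selfAdjointPart ℝ T).2
  have hTA : IsCompactOperator ⇑(T - A) := by
    rw [sub_eq_of_eq_add' (StarModule.selfAdjointPart_add_skewAdjointPart ℝ T).symm,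
      skewAdjointPart_apply_coe, star_eq_adjoint]
    exact hT.smul _
  refine ⟨2 / (‖A‖ ^ 2 + 1), by positivity, fun ε hε hεδ => ?_⟩
  have hεA : ε * ‖A‖ ^ 2 ≤ 2 := by
    nlinarith [(lt_div_iff₀ (by positivity)).mp hεδ]
  have hcompact : IsCompactOperator ⇑((1 - ε • A ^ 2) - (1 - ε • T ^ 2) : H →L[ℝ] H) := by
    rw [sub_sub_sub_cancel_left, ← smul_sub]
    exact (isCompactOperator_sq_sub_sq hTA).smul ε
  calc essNorm (1 - ε • T ^ 2) ≤ ‖1 - ε • A ^ 2‖ :=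
        essNorm_le_norm_of_isCompactOperator_sub hcompact
    _ ≤ 1 := hA.norm_one_sub_smul_sq_le_one hε.le hεA
    _ ≤ 1 + C * ε := le_add_of_nonneg_right (by positivity)
end

section
/- Let X be a real Banach space, let A ⊆ B(X) be a unital commutative subalgebra consisting of essentially real operators, and suppose x ∈ X** and y ∈ X* satisfy ⟨x, y⟩ ≥ 0 and |⟨x, S*y⟩| ≤ ‖S‖_e · ⟨x, y⟩ for all S ∈ A. Then ⟨x, (exp T)* y⟩ ≥ 0 for every T ∈ A, where exp T is the exponential of T in the Banach algebra B(X). -/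
open NormedSpace

/-- An operator `T` is essentially real if `‖1 - ε T²‖ₑ ≤ 1 + o(ε)` as `ε → 0⁺`. -/
def EssentiallyReal {X : Type*} [NormedAddCommGroup X] [NormedSpace ℝ X]
    (T : X →L[ℝ] X) : Prop :=
  ∀ C > (0 : ℝ), ∃ δ > (0 : ℝ), ∀ ε : ℝ, 0 < ε → ε < δ →
    essNorm (1 - ε • T ^ 2) ≤ 1 + C * ε

/-- The Banach-space adjoint (dual map) of a bounded operator, `y ↦ y ∘ T`. -/
noncomputable def dualOp {𝕜 X : Type*} [NontriviallyNormedField 𝕜] [NormedAddCommGroup X]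
    [NormedSpace 𝕜 X] (T : X →L[𝕜] X) : StrongDual 𝕜 X →L[𝕜] StrongDual 𝕜 X :=
  (ContinuousLinearMap.compL 𝕜 X X 𝕜).flip T

/-- If `A` is a (unital) commutative algebra of essentially real operators and the vectors
`x ∈ X**`, `y ∈ X*` satisfy `⟨x, y⟩ ≥ 0` and `|⟨x, S*y⟩| ≤ ‖S‖ₑ ⟨x, y⟩` for all `S ∈ A`, then
`⟨x, (exp T)* y⟩ ≥ 0` for every `T ∈ A`. -/
theorem exp_dual_nonneg {X : Type*} [NormedAddCommGroup X] [NormedSpace ℝ X] [CompleteSpace X]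
    (A : Subalgebra ℝ (X →L[ℝ] X))
    (hcomm : ∀ S ∈ A, ∀ T ∈ A, S * T = T * S)
    (hreal : ∀ T ∈ A, EssentiallyReal T)
    (x : StrongDual ℝ (StrongDual ℝ X)) (y : StrongDual ℝ X)
    (hxy : 0 ≤ x y)
    (hineq : ∀ S ∈ A, |x (dualOp S y)| ≤ essNorm S * x y) :
    ∀ T ∈ A, 0 ≤ x (dualOp (NormedSpace.exp T) y) := by
  -- The functional Φ : B(X) → ℝ, S ↦ ⟨x, S* y⟩, as a continuous linear map.
  set Φ : (X →L[ℝ] X) →L[ℝ] ℝ :=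
    x.comp (((ContinuousLinearMap.compL ℝ X X ℝ).flip).flip y) with hΦ
  have hΦeq : ∀ S : X →L[ℝ] X, Φ S = x (dualOp S y) := fun S => rfl
  have hΦ1 : Φ 1 = x y := by
    have : dualOp (1 : X →L[ℝ] X) y = y := by
      ext z; simp [dualOp]
    rw [hΦeq, this]
  -- Step 1: Φ(T²) ≥ 0 for every T ∈ A.
  have key : ∀ T ∈ A, 0 ≤ Φ (T ^ 2) := by
    intro T hT
    have hbound : ∀ C > (0 : ℝ), -Φ (T ^ 2) ≤ C * x y := by
      intro C hC
      obtain ⟨δ, hδ, hδ'⟩ := hreal T hT C hC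
      set ε := δ / 2 with hε
      have hε0 : 0 < ε := by positivity
      have hεδ : ε < δ := by simpa [hε] using half_lt_self hδ
      have hmem : (1 : X →L[ℝ] X) - ε • T ^ 2 ∈ A :=
        A.sub_mem A.one_mem (A.smul_mem (A.pow_mem hT 2) ε)
      have h1 : |Φ ((1 : X →L[ℝ] X) - ε • T ^ 2)| ≤ essNorm (1 - ε • T ^ 2) * x y := by
        rw [hΦeq]; exact hineq _ hmem
      have h2 : essNorm ((1 : X →L[ℝ] X) - ε • T ^ 2) * x y ≤ (1 + C * ε) * x y :=
        mul_le_mul_of_nonneg_right (hδ' ε hε0 hεδ) hxy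
      have h3 : Φ ((1 : X →L[ℝ] X) - ε • T ^ 2) = x y - ε * Φ (T ^ 2) := by
        rw [map_sub, map_smul, hΦ1, smul_eq_mul]
      have h4 : x y - ε * Φ (T ^ 2) ≤ (1 + C * ε) * x y :=
        h3 ▸ (le_abs_self _).trans (h1.trans h2)
      have h5 : -Φ (T ^ 2) * ε ≤ C * x y * ε := by nlinarith
      exact le_of_mul_le_mul_right (by linarith) hε0
    -- conclude from ∀ C > 0, -Φ(T²) ≤ C * x y
    rw [← neg_nonpos]
    refine le_of_forall_pos_le_add fun η hη => ?_
    rcases eq_or_lt_of_le hxy with h | h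
    · have := hbound 1 one_pos
      rw [← h] at this; linarith
    · have := hbound (η / x y) (by positivity)
      rw [div_mul_cancel₀ _ (ne_of_gt h)] at this
      linarith
  -- Step 2: approximate exp T by squares of partial sums of exp(T/2).
  intro T hT
  set S₀ : X →L[ℝ] X := (2⁻¹ : ℝ) • T with hS₀
  have hS₀A : S₀ ∈ A := A.smul_mem hT _
  have hexp : NormedSpace.exp T = NormedSpace.exp S₀ * NormedSpace.exp S₀ := by
    letI : NormedAlgebra ℚ (X →L[ℝ] X) := NormedAlgebra.restrictScalars ℚ ℝ (X →L[ℝ] X)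
    rw [← NormedSpace.exp_add_of_commute (Commute.refl S₀)]
    congr 1
    rw [hS₀, ← add_smul]
    norm_num
  set P : ℕ → (X →L[ℝ] X) := fun n => ∑ k ∈ Finset.range n, ((Nat.factorial k : ℝ))⁻¹ • S₀ ^ k with hP
  have hPA : ∀ n, P n ∈ A := fun n =>
    A.sum_mem fun k _ => A.smul_mem (A.pow_mem hS₀A k) _
  have hPtend : Filter.Tendsto P Filter.atTop (nhds (NormedSpace.exp S₀)) :=
    (NormedSpace.exp_series_hasSum_exp' (𝕂 := ℝ) S₀).tendsto_sum_nat
  have hsq : Filter.Tendsto (fun n => Φ (P n ^ 2)) Filter.atTop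
      (nhds (Φ (NormedSpace.exp T))) := by
    rw [hexp]
    have : Filter.Tendsto (fun n => P n ^ 2) Filter.atTop
        (nhds (NormedSpace.exp S₀ * NormedSpace.exp S₀)) := by
      simpa [pow_two] using hPtend.mul hPtend
    exact (Φ.continuous.tendsto _).comp this
  have hfinal : 0 ≤ Φ (NormedSpace.exp T) :=
    ge_of_tendsto hsq (Filter.Eventually.of_forall fun n => key (P n) (hPA n))
  rw [← hΦeq]
  exact hfinal
end

section
/- Let Y be a real Banach space and let V ⊆ Y be a norm-closed convex proper subset (V ≠ Y) that contains a nonzero point and is invariant under multiplication by every scalar t with |t| ≤ 1. Then there exist a nonzero y ∈ V and a nonzero bounded linear functional x ∈ Y* such that x(y) ≥ 0 and |x(w)| ≤ x(y) for all w ∈ V. -/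
open NormedSpace Filter Topology

/-- An Ekeland-type lemma: in a complete normed space, given a closed set `V` containing `v0`
and a point `z`, there is `y ∈ V` which "almost minimizes" distance to `z` in the sense that
`‖y - z‖ ≤ ‖w - z‖ + 2⁻¹ * ‖w - y‖` for all `w ∈ V`. -/
lemma ekeland_half {Y : Type*} [NormedAddCommGroup Y] [NormedSpace ℝ Y] [CompleteSpace Y]
    {V : Set Y} (hclosed : IsClosed V) (z v0 : Y) (hv0 : v0 ∈ V) :
    ∃ y ∈ V, ∀ w ∈ V, ‖y - z‖ ≤ ‖w - z‖ + 2⁻¹ * ‖w - y‖ := by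
  classical
  set f : Y → ℝ := fun w => ‖w - z‖ with hf
  set S : Y → Set Y := fun y => {w ∈ V | f w + 2⁻¹ * ‖w - y‖ ≤ f y} with hS
  have hself : ∀ y ∈ V, y ∈ S y := fun y hy => ⟨hy, by simp⟩
  have htri : ∀ a b c : Y, ‖a - c‖ ≤ ‖a - b‖ + ‖b - c‖ := by
    intro a b c
    simpa [dist_eq_norm] using dist_triangle a b c
  have hmono : ∀ y, ∀ y' ∈ S y, S y' ⊆ S y := by
    intro y y' hy' w hw
    refine ⟨hw.1, ?_⟩
    have h1 := hw.2
    have h2 := hy'.2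
    have h3 := htri w y' y
    nlinarith
  have hbdd : ∀ y, BddBelow (f '' S y) := by
    intro y
    refine ⟨0, ?_⟩
    rintro a ⟨w, _, rfl⟩
    exact norm_nonneg _
  have hex : ∀ p : Y × ℕ, ∃ y' : Y, p.1 ∈ V →
      y' ∈ S p.1 ∧ f y' < sInf (f '' S p.1) + (2⁻¹ : ℝ) ^ p.2 := by
    intro p
    by_cases h : p.1 ∈ V
    · have hne : (f '' S p.1).Nonempty := ⟨f p.1, Set.mem_image_of_mem f (hself p.1 h)⟩
      obtain ⟨a, ⟨w, hwS, rfl⟩, ha⟩ :=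
        Real.lt_sInf_add_pos hne (show (0:ℝ) < (2⁻¹:ℝ) ^ p.2 by positivity)
      exact ⟨w, fun _ => ⟨hwS, ha⟩⟩
    · exact ⟨v0, fun h' => absurd h' h⟩
  choose g hg using hex
  set u : ℕ → Y := fun n => Nat.rec v0 (fun n y => g (y, n)) n with hu
  have huV : ∀ n, u n ∈ V := by
    intro n
    induction n with
    | zero => exact hv0
    | succ n ih => exact ((hg (u n, n) ih).1).1
  have hstep : ∀ n, u (n + 1) ∈ S (u n) := fun n => (hg (u n, n) (huV n)).1
  have hinf : ∀ n, f (u (n + 1)) < sInf (f '' S (u n)) + (2⁻¹ : ℝ) ^ n :=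
    fun n => (hg (u n, n) (huV n)).2
  have hsmall : ∀ n, ∀ w ∈ S (u (n + 1)), 2⁻¹ * ‖w - u (n + 1)‖ < (2⁻¹ : ℝ) ^ n := by
    intro n w hw
    have h1 : w ∈ S (u n) := hmono _ _ (hstep n) hw
    have h2 : sInf (f '' S (u n)) ≤ f w := csInf_le (hbdd _) ⟨w, h1, rfl⟩
    have h3 := hw.2
    have h4 := hinf n
    linarith
  have hSchain : ∀ k m, k ≤ m → S (u m) ⊆ S (u k) := by
    intro k m hkm
    induction m with
    | zero => rw [Nat.le_zero.mp hkm]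
    | succ m ih =>
      rcases Nat.eq_or_lt_of_le hkm with h | h
      · rw [h]
      · exact fun w hw => ih (Nat.lt_succ_iff.mp h) (hmono (u m) _ (hstep m) hw)
  have hmem : ∀ k m, k ≤ m → u m ∈ S (u k) :=
    fun k m h => hSchain k m h (hself _ (huV m))
  have hcauchy : CauchySeq u := by
    refine cauchySeq_of_le_geometric (2⁻¹ : ℝ) (2 * ‖v0 - z‖ + 4) (by norm_num) ?_
    intro n
    match n with
    | 0 =>
      have h1 := (hstep 0).2
      have h2 : (0:ℝ) ≤ f (u 1) := norm_nonneg _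
      have h3 : f (u 0) = ‖v0 - z‖ := rfl
      have : ‖u 1 - u 0‖ ≤ 2 * ‖v0 - z‖ := by
        rw [h3] at h1; nlinarith
      rw [dist_eq_norm, ← norm_sub_rev]
      simp only [zero_add] at h1 ⊢
      simp only [pow_zero, mul_one]
      linarith
    | (m + 1) =>
      have h1 := hsmall m (u (m + 2)) (hmem (m + 1) (m + 2) (by omega))
      rw [dist_eq_norm, ← norm_sub_rev]
      have h2 : (0:ℝ) ≤ ‖v0 - z‖ := norm_nonneg _
      have h3 : (0:ℝ) < (2⁻¹:ℝ) ^ m := by positivity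
      have h4 : ((2⁻¹:ℝ) ^ (m + 1)) = 2⁻¹ * (2⁻¹:ℝ) ^ m := by ring
      nlinarith
  obtain ⟨y, hy⟩ := cauchySeq_tendsto_of_complete hcauchy
  have hyV : y ∈ V := hclosed.mem_of_tendsto hy (Filter.Eventually.of_forall huV)
  have hScl : ∀ k, IsClosed (S (u k)) := by
    intro k
    have hcont : Continuous fun w : Y => f w + 2⁻¹ * ‖w - u k‖ :=
      ((continuous_id.sub continuous_const).norm).add
        (continuous_const.mul ((continuous_id.sub continuous_const).norm))
    exact hclosed.inter (isClosed_le hcont continuous_const)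
  have hyS : ∀ k, y ∈ S (u k) := by
    intro k
    exact (hScl k).mem_of_tendsto hy
      (Filter.eventually_atTop.2 ⟨k, fun m hm => hmem k m hm⟩)
  refine ⟨y, hyV, fun w hw => ?_⟩
  by_contra hcon
  push_neg at hcon
  have hwS : ∀ n, w ∈ S (u n) := by
    intro n
    refine ⟨hw, ?_⟩
    have hy' := (hyS n).2
    have h3 := htri w y (u n)
    have : f w + 2⁻¹ * ‖w - y‖ < f y := hcon
    nlinarith
  have hlim : Tendsto u atTop (𝓝 w) := by
    rw [tendsto_iff_dist_tendsto_zero]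
    have hg0 : Tendsto (fun n : ℕ => 4 * (2⁻¹:ℝ) ^ n) atTop (𝓝 0) := by
      have h0 : Tendsto (fun n : ℕ => (2⁻¹:ℝ) ^ n) atTop (𝓝 0) :=
        tendsto_pow_atTop_nhds_zero_of_lt_one (by norm_num) (by norm_num)
      simpa using h0.const_mul 4
    refine squeeze_zero' (Filter.Eventually.of_forall fun n => dist_nonneg) ?_ hg0
    · refine Filter.eventually_atTop.2 ⟨1, fun n hn => ?_⟩
      obtain ⟨m, rfl⟩ := Nat.exists_eq_add_of_le' hn
      have h1 := hsmall m w (hwS (m + 1))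
      show dist (u (m + 1)) w ≤ 4 * (2⁻¹:ℝ) ^ (m + 1)
      rw [dist_eq_norm, ← norm_sub_rev]
      have h4 : ((2⁻¹:ℝ) ^ (m + 1)) = 2⁻¹ * (2⁻¹:ℝ) ^ m := by ring
      nlinarith
  have hwy : w = y := tendsto_nhds_unique hlim hy
  rw [hwy] at hcon
  simp only [sub_self, norm_zero, mul_zero, add_zero] at hcon
  exact lt_irrefl _ hcon

/-- Bishop–Phelps corollary: if `V` is a norm-closed convex proper subset of a real Banach
space containing a nonzero point and invariant under multiplication by scalars `t` with
`|t| ≤ 1`, then there are a nonzero `y ∈ V` and a nonzero functional `x` with `x(y) ≥ 0` and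
`|x(w)| ≤ x(y)` for all `w ∈ V`. -/
theorem exists_support_functional {Y : Type*} [NormedAddCommGroup Y] [NormedSpace ℝ Y]
    [CompleteSpace Y] (V : Set Y) (hclosed : IsClosed V) (hconv : Convex ℝ V)
    (hproper : V ≠ Set.univ) (hne : ∃ v ∈ V, v ≠ 0)
    (hinv : ∀ t : ℝ, |t| ≤ 1 → ∀ w ∈ V, t • w ∈ V) :
    ∃ y ∈ V, y ≠ 0 ∧ ∃ x : StrongDual ℝ Y, x ≠ 0 ∧ 0 ≤ x y ∧ ∀ w ∈ V, |x w| ≤ x y := by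
  obtain ⟨v, hvV, hv0⟩ := hne
  have h0V : (0 : Y) ∈ V := by
    have := hinv 0 (by simp) v hvV
    simpa using this
  obtain ⟨z, hz⟩ : ∃ z, z ∉ V := by
    by_contra h
    push_neg at h
    exact hproper (Set.eq_univ_of_forall h)
  obtain ⟨y₀, hy₀V, hy₀⟩ := ekeland_half hclosed z v hvV
  set d := ‖y₀ - z‖ with hd
  have hdpos : 0 < d := by
    rw [hd, norm_pos_iff, sub_ne_zero]
    intro h
    exact hz (h ▸ hy₀V)
  set U : Set Y := {u | ‖u - z‖ + 2⁻¹ * ‖u - y₀‖ < d} with hU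
  have hUopen : IsOpen U := by
    have hcont : Continuous fun u : Y => ‖u - z‖ + 2⁻¹ * ‖u - y₀‖ :=
      ((continuous_id.sub continuous_const).norm).add
        (continuous_const.mul ((continuous_id.sub continuous_const).norm))
    exact isOpen_lt hcont continuous_const
  have hUconv : Convex ℝ U := by
    intro u1 h1 u2 h2 a b ha hb hab
    simp only [hU, Set.mem_setOf_eq] at h1 h2 ⊢
    have e1 : a • u1 + b • u2 - z = a • (u1 - z) + b • (u2 - z) := by
      calc a • u1 + b • u2 - z = a • u1 + b • u2 - (a + b) • z := by rw [hab, one_smul]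
        _ = a • (u1 - z) + b • (u2 - z) := by rw [add_smul, smul_sub, smul_sub]; abel
    have e2 : a • u1 + b • u2 - y₀ = a • (u1 - y₀) + b • (u2 - y₀) := by
      calc a • u1 + b • u2 - y₀ = a • u1 + b • u2 - (a + b) • y₀ := by rw [hab, one_smul]
        _ = a • (u1 - y₀) + b • (u2 - y₀) := by rw [add_smul, smul_sub, smul_sub]; abel
    have n1 : ‖a • u1 + b • u2 - z‖ ≤ a * ‖u1 - z‖ + b * ‖u2 - z‖ := by
      rw [e1]
      refine (norm_add_le _ _).trans ?_
      rw [norm_smul, norm_smul, Real.norm_of_nonneg ha, Real.norm_of_nonneg hb]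
    have n2 : ‖a • u1 + b • u2 - y₀‖ ≤ a * ‖u1 - y₀‖ + b * ‖u2 - y₀‖ := by
      rw [e2]
      refine (norm_add_le _ _).trans ?_
      rw [norm_smul, norm_smul, Real.norm_of_nonneg ha, Real.norm_of_nonneg hb]
    rcases eq_or_lt_of_le ha with rfl | ha'
    · have hb1 : b = 1 := by linarith
      simp only [zero_smul, zero_add, hb1, one_smul, zero_mul] at *
      linarith
    · have k1 : a * (‖u1 - z‖ + 2⁻¹ * ‖u1 - y₀‖) < a * d :=
        mul_lt_mul_of_pos_left h1 ha'
      have k2 : b * (‖u2 - z‖ + 2⁻¹ * ‖u2 - y₀‖) ≤ b * d :=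
        mul_le_mul_of_nonneg_left h2.le hb
      nlinarith
  have hdisj : Disjoint U V := by
    rw [Set.disjoint_left]
    intro w hwU hwV
    have h1 := hy₀ w hwV
    have h2 : ‖w - z‖ + 2⁻¹ * ‖w - y₀‖ < d := hwU
    linarith
  obtain ⟨x₁, c, hfU, hfV⟩ := geometric_hahn_banach_open hUconv hUopen hconv hdisj
  have hzU : z ∈ U := by
    show ‖z - z‖ + 2⁻¹ * ‖z - y₀‖ < d
    rw [sub_self, norm_zero, norm_sub_rev]
    linarith [hdpos, hd.le, hd.ge]
  -- f y₀ ≤ c via segment from y₀ to z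
  have hfy₀le : x₁ y₀ ≤ c := by
    have hmemU : ∀ n : ℕ, (y₀ + (1 / ((n : ℝ) + 1)) • (z - y₀)) ∈ U := by
      intro n
      set t : ℝ := 1 / ((n : ℝ) + 1) with ht
      have ht0 : 0 < t := by positivity
      have ht1 : t ≤ 1 := by
        rw [ht]
        rw [div_le_one (by positivity)]
        simp
      have e1 : y₀ + t • (z - y₀) - z = (1 - t) • (y₀ - z) := by module
      have e2 : y₀ + t • (z - y₀) - y₀ = t • (z - y₀) := by abel
      show ‖y₀ + t • (z - y₀) - z‖ + 2⁻¹ * ‖y₀ + t • (z - y₀) - y₀‖ < d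
      rw [e1, e2, norm_smul, norm_smul, Real.norm_of_nonneg (by linarith),
        Real.norm_of_nonneg ht0.le, norm_sub_rev z y₀]
      nlinarith [hdpos, ht0, hd.le, hd.ge, mul_pos ht0 hdpos]
    have hlt : ∀ n : ℕ, x₁ y₀ + (1 / ((n : ℝ) + 1)) * x₁ (z - y₀) < c := by
      intro n
      have := hfU _ (hmemU n)
      rwa [map_add, map_smul, smul_eq_mul] at this
    have htend : Tendsto (fun n : ℕ => x₁ y₀ + (1 / ((n : ℝ) + 1)) * x₁ (z - y₀))
        atTop (𝓝 (x₁ y₀)) := by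
      have h0 : Tendsto (fun n : ℕ => 1 / ((n : ℝ) + 1)) atTop (𝓝 0) :=
        tendsto_one_div_add_atTop_nhds_zero_nat
      have := tendsto_const_nhds (x := x₁ y₀) (f := atTop (α := ℕ)) |>.add
        (h0.mul_const (x₁ (z - y₀)))
      simpa using this
    exact le_of_tendsto htend (Filter.Eventually.of_forall fun n => (hlt n).le)
  have hfy₀ : x₁ y₀ = c := le_antisymm hfy₀le (hfV y₀ hy₀V)
  have hx₁ne : x₁ ≠ 0 := by
    intro h
    have h1 := hfU z hzU
    have h2 := hfV y₀ hy₀V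
    rw [h] at h1 h2
    simp at h1 h2
    linarith
  set x : StrongDual ℝ Y := -x₁ with hx
  have hxne : x ≠ 0 := neg_ne_zero.2 hx₁ne
  have hxbound : ∀ w ∈ V, |x w| ≤ x y₀ := by
    intro w hw
    have hmw : -w ∈ V := by
      have := hinv (-1) (by norm_num) w hw
      simpa using this
    have h1 : c ≤ x₁ w := hfV w hw
    have h2 : c ≤ x₁ (-w) := hfV _ hmw
    rw [map_neg] at h2
    have hxw : x w = -(x₁ w) := by simp [hx]
    have hxy₀val : x y₀ = -c := by simp [hx, hfy₀]
    rw [hxw, hxy₀val, abs_le]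
    constructor <;> linarith
  have hxy₀val : x y₀ = -c := by simp [hx, hfy₀]
  have hc0 : c ≤ 0 := by have := hfV 0 h0V; simpa using this
  by_cases hy₀0 : y₀ = 0
  · have hc' : c = 0 := by rw [hy₀0, map_zero] at hfy₀; exact hfy₀.symm
    have hzero : ∀ w ∈ V, x w = 0 := by
      intro w hw
      have hb := hxbound w hw
      rw [hxy₀val, hc'] at hb
      exact abs_eq_zero.mp (le_antisymm (by simpa using hb) (abs_nonneg _))
    refine ⟨v, hvV, hv0, x, hxne, ?_, ?_⟩
    · rw [hzero v hvV]
    · intro w hw; rw [hzero w hw, hzero v hvV]; simp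
  · exact ⟨y₀, hy₀V, hy₀0, x, hxne, by rw [hxy₀val]; linarith, hxbound⟩
end
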